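/- The pair of sequences $\alpha_n, \beta_n$ with $\alpha_0 = 1$, $\alpha_n = q^{n^2}(q^{-n/2} + q^{n/2})$ for $n > 0$, and $\beta_n = 1/((q;q)_n (q^{1/2};q)_n)$, forms a Bailey pair relative to $a = 1$; that is, $\beta_n = \sum_{r=0}^{n} \alpha_r / ((q;q)_{n-r} (q;q)_{n+r})$ for all $n \ge 0$. -/

import Mathlib

/-!
Multiply both sides by `(q;q)_{2n}` and write `x = q^{1/2}`. Since
`(q;q)_n (q^{1/2};q)_n = (x;x)_{2n}` and `(q;q)_{2n} = (x;x)_{2n} (-x;x)_{2n}`, the left side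
becomes `(-x;x)_{2n}`, while the `r`-th term on the right becomes `α_r` times the Gaussian binomial
`[2n, n-r]` in base `x² = q`. The identity
`(-x;x)_m = ∑_j x^{T(2j-m)} [m, j]_{x²}`, with `T(d) = d(d+1)/2`,
follows by induction on `m` from the `q`-Pascal rule and the symmetry `[m, j] = [m, m-j]`.
At `m = 2n` the terms `j = n - r` and `j = n + r` contribute `x^{2r²-r}` and `x^{2r²+r}`,
which are exactly the two halves of `α_r`.
-/

open PowerSeries

/-- The q-Pochhammer symbol `(q^a; q^b)_m = ∏_{t<m} (1 - q^{a+bt})`. -/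
noncomputable def poch (a b m : ℕ) : PowerSeries ℚ :=
  ∏ t ∈ Finset.range m, (1 - (X : PowerSeries ℚ) ^ (a + b * t))

/-- `α_n` of Slater's Bailey pair F(1): `α_0 = 1`, `α_n = q^{n²}(q^{-n/2}+q^{n/2})` for `n > 0`,
written after the dilation `q ↦ q²` so that all powers are integral. -/
noncomputable def alphaF1 (n : ℕ) : PowerSeries ℚ :=
  if n = 0 then 1 else (X : PowerSeries ℚ) ^ (2*n^2 - n) + (X : PowerSeries ℚ) ^ (2*n^2 + n)

open Finset

def triangle (d : ℤ) : ℕ := (d * (d + 1) / 2).toNat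

theorem two_mul_triangle (d : ℤ) : 2 * (triangle d : ℤ) = d * (d + 1) := by
  have heven := Int.even_mul_succ_self d
  have hnonneg : 0 ≤ d * (d + 1) := by nlinarith [sq_nonneg (2 * d + 1)]
  rw [triangle, Int.toNat_of_nonneg (Int.ediv_nonneg hnonneg zero_le_two)]
  exact Int.mul_ediv_cancel' (even_iff_two_dvd.mp heven)

theorem triangle_neg_sub_one (d : ℤ) : triangle (-d - 1) = triangle d := by
  have h₁ := two_mul_triangle (-d - 1)
  have h₂ := two_mul_triangle d
  exact_mod_cast (by linarith : (triangle (-d - 1) : ℤ) = triangle d)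

theorem triangle_add_one (d : ℤ) : (triangle (d + 1) : ℤ) = triangle d + d + 1 := by
  have h₁ := two_mul_triangle (d + 1)
  have h₂ := two_mul_triangle d
  linarith

theorem triangle_two_mul (r : ℕ) : triangle (2 * r) = 2 * r ^ 2 + r := by
  have h := two_mul_triangle (2 * r)
  zify
  linarith

theorem triangle_neg_two_mul (r : ℕ) : triangle (-(2 * r)) = 2 * r ^ 2 - r := by
  have h := two_mul_triangle (-(2 * r))
  zify [(by nlinarith : r ≤ 2 * r ^ 2)]
  linarith

section GaussBinom

variable {R S : Type*} [CommRing R] [CommRing S]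

def qPoch (q : R) (m : ℕ) : R := ∏ t ∈ range m, (1 - q ^ (t + 1))

def gaussBinom (q : R) : ℕ → ℕ → R
  | 0, 0 => 1
  | 0, _ + 1 => 0
  | _ + 1, 0 => 1
  | m + 1, k + 1 => gaussBinom q m (k + 1) + q ^ (m - k) * gaussBinom q m k

theorem qPoch_succ (q : R) (m : ℕ) : qPoch q (m + 1) = qPoch q m * (1 - q ^ (m + 1)) :=
  prod_range_succ _ m

@[simp]
theorem qPoch_zero_left (m : ℕ) : qPoch (0 : R) m = 1 := by
  simp [qPoch]

theorem map_qPoch (f : R →+* S) (q : R) (m : ℕ) : f (qPoch q m) = qPoch (f q) m := by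
  simp [qPoch]

@[simp]
theorem gaussBinom_zero_right (q : R) (m : ℕ) : gaussBinom q m 0 = 1 := by
  cases m <;> rfl

theorem gaussBinom_succ_succ (q : R) (m k : ℕ) :
    gaussBinom q (m + 1) (k + 1) = gaussBinom q m (k + 1) + q ^ (m - k) * gaussBinom q m k :=
  rfl

theorem gaussBinom_eq_zero_of_lt (q : R) {m k : ℕ} (h : m < k) : gaussBinom q m k = 0 := by
  induction m generalizing k with
  | zero => obtain ⟨k, rfl⟩ := Nat.exists_eq_succ_of_ne_zero h.ne'; rfl
  | succ m ih =>
    obtain ⟨k, rfl⟩ := Nat.exists_eq_succ_of_ne_zero (by omega : k ≠ 0)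
    rw [gaussBinom_succ_succ, ih (by omega), ih (by omega), mul_zero, add_zero]

@[simp]
theorem gaussBinom_self (q : R) (m : ℕ) : gaussBinom q m m = 1 := by
  induction m with
  | zero => rfl
  | succ m ih => rw [gaussBinom_succ_succ, gaussBinom_eq_zero_of_lt q m.lt_succ_self, ih]; simp

theorem map_gaussBinom (f : R →+* S) (q : R) (m k : ℕ) :
    f (gaussBinom q m k) = gaussBinom (f q) m k := by
  induction m generalizing k with
  | zero => cases k <;> simp [gaussBinom]
  | succ m ih => cases k <;> simp [gaussBinom_succ_succ, ih]

theorem qPoch_mul_qPoch_mul_gaussBinom (q : R) {m k : ℕ} (h : k ≤ m) :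
    qPoch q k * qPoch q (m - k) * gaussBinom q m k = qPoch q m := by
  induction m generalizing k with
  | zero =>
    obtain rfl : k = 0 := by omega
    simp [qPoch]
  | succ m ih =>
    rcases k with _ | k
    · simp [qPoch]
    obtain rfl | hk := eq_or_lt_of_le (Nat.le_of_succ_le_succ h)
    · simp [qPoch]
    obtain ⟨l, rfl⟩ := Nat.exists_eq_add_of_le (by omega : k + 1 ≤ m)
    have h₁ := ih (k := k + 1) (by omega)
    have h₂ := ih (k := k) (by omega)
    rw [show k + 1 + l - (k + 1) = l by omega, qPoch_succ q k] at h₁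
    rw [show k + 1 + l - k = l + 1 by omega, qPoch_succ q l] at h₂
    rw [gaussBinom_succ_succ, show k + 1 + l - k = l + 1 by omega,
      show k + 1 + l + 1 - (k + 1) = l + 1 by omega, qPoch_succ q l, qPoch_succ q k,
      qPoch_succ q (k + 1 + l)]
    linear_combination (1 - q ^ (l + 1)) * h₁ + q ^ (l + 1) * (1 - q ^ (k + 1)) * h₂

theorem qPoch_X_ne_zero (m : ℕ) : qPoch (Polynomial.X : Polynomial ℤ) m ≠ 0 := fun h => by
  simpa [map_qPoch] using congrArg (Polynomial.evalRingHom 0) h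

-- Symmetry is a polynomial identity in `q`, so it suffices to cancel in the domain `ℤ[q]`.
theorem gaussBinom_symm (q : R) {m k : ℕ} (h : k ≤ m) :
    gaussBinom q m k = gaussBinom q m (m - k) := by
  have key : gaussBinom (Polynomial.X : Polynomial ℤ) m k
      = gaussBinom Polynomial.X m (m - k) := by
    refine mul_left_cancel₀ (mul_ne_zero (qPoch_X_ne_zero k) (qPoch_X_ne_zero (m - k))) ?_
    have h' := qPoch_mul_qPoch_mul_gaussBinom (Polynomial.X : Polynomial ℤ) (Nat.sub_le m k)
    rw [Nat.sub_sub_self h] at h'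
    rw [qPoch_mul_qPoch_mul_gaussBinom _ h, mul_comm (qPoch _ k), h']
  simpa [map_gaussBinom] using congrArg (Polynomial.eval₂RingHom (Int.castRingHom R) q) key

theorem qPoch_sq (x : R) (m : ℕ) :
    qPoch (x ^ 2) m = qPoch x m * ∏ t ∈ range m, (1 + x ^ (t + 1)) := by
  rw [qPoch, qPoch, ← prod_mul_distrib]
  exact prod_congr rfl fun t _ => by ring

theorem qPoch_two_mul (x : R) (n : ℕ) :
    qPoch x (2 * n) = qPoch (x ^ 2) n * ∏ t ∈ range n, (1 - x ^ (2 * t + 1)) := by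
  induction n with
  | zero => simp [qPoch]
  | succ n ih =>
    rw [show 2 * (n + 1) = 2 * n + 1 + 1 by ring, qPoch_succ, qPoch_succ, ih, qPoch_succ,
      prod_range_succ]
    ring


theorem sum_mul_gaussBinom_succ (q : R) (f : ℕ → R) (m : ℕ) :
    ∑ j ∈ range (m + 2), f j * gaussBinom q (m + 1) j
      = ∑ j ∈ range (m + 2), f j * gaussBinom q m j
        + ∑ j ∈ range (m + 1), f (j + 1) * q ^ (m - j) * gaussBinom q m j := by
  simp only [sum_range_succ' _ (m + 1), gaussBinom_succ_succ, gaussBinom_zero_right, mul_add,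
    sum_add_distrib, mul_assoc]
  ring

theorem sum_pow_triangle_mul_gaussBinom_reflect (x : R) (m : ℕ) :
    ∑ j ∈ range (m + 2), x ^ triangle (2 * j - (m + 1)) * gaussBinom (x ^ 2) m j
      = ∑ j ∈ range (m + 1), x ^ triangle (2 * j - m) * gaussBinom (x ^ 2) m j := by
  rw [sum_range_succ, gaussBinom_eq_zero_of_lt _ (by omega), mul_zero, add_zero,
    ← sum_range_reflect]
  refine sum_congr rfl fun j hj => ?_
  have hj : j ≤ m := Nat.lt_succ_iff.mp (mem_range.mp hj)
  rw [Nat.add_sub_cancel, gaussBinom_symm _ hj, Nat.cast_sub hj, ← triangle_neg_sub_one]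
  ring_nf

theorem prod_one_add_pow_eq_sum_gaussBinom (x : R) (m : ℕ) :
    ∏ t ∈ range m, (1 + x ^ (t + 1))
      = ∑ j ∈ range (m + 1), x ^ triangle (2 * j - m) * gaussBinom (x ^ 2) m j := by
  induction m with
  | zero => simp [triangle]
  | succ m ih =>
    have hshift : ∀ j ∈ range (m + 1),
        x ^ triangle (2 * ↑(j + 1) - ↑(m + 1)) * (x ^ 2) ^ (m - j) * gaussBinom (x ^ 2) m j
          = x ^ (m + 1) * (x ^ triangle (2 * j - m) * gaussBinom (x ^ 2) m j) := by
      intro j hj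
      have hj : j ≤ m := Nat.lt_succ_iff.mp (mem_range.mp hj)
      rw [← pow_mul, ← mul_assoc, ← pow_add, ← pow_add]
      congr 2
      zify [hj]
      rw [show 2 * ((j : ℤ) + 1) - (m + 1) = 2 * j - m + 1 by ring, triangle_add_one]
      ring
    rw [sum_mul_gaussBinom_succ, sum_congr rfl hshift, ← mul_sum, prod_range_succ, ih]
    push_cast
    rw [sum_pow_triangle_mul_gaussBinom_reflect]
    ring

end GaussBinom

theorem poch_self (b m : ℕ) : poch b b m = qPoch ((X : PowerSeries ℚ) ^ b) m :=
  prod_congr rfl fun t _ => by rw [← pow_mul, mul_add_one, add_comm]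

theorem poch_two_two_mul_poch_one_two (n : ℕ) :
    poch 2 2 n * poch 1 2 n = qPoch (X : PowerSeries ℚ) (2 * n) := by
  rw [qPoch_two_mul, poch_self, poch]
  exact congrArg _ (prod_congr rfl fun t _ => by rw [add_comm])

theorem constantCoeff_poch {a : ℕ} (ha : a ≠ 0) (b m : ℕ) :
    constantCoeff (poch a b m) = 1 := by
  simp [poch, ha]

theorem inv_eq_mul_inv_of_mul_eq {k : Type*} [Field k] {b c d : PowerSeries k}
    (hb : constantCoeff b ≠ 0) (hd : constantCoeff d ≠ 0) (h : b * c = d) :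
    b⁻¹ = c * d⁻¹ := by
  rw [PowerSeries.eq_mul_inv_iff_mul_eq hd, ← h, ← mul_assoc, PowerSeries.inv_mul_cancel _ hb,
    one_mul]

theorem alphaF1_eq (r : ℕ) :
    alphaF1 r = (X : PowerSeries ℚ) ^ triangle (-(2 * r))
      + if r = 0 then 0 else (X : PowerSeries ℚ) ^ triangle (2 * r) := by
  by_cases hr : r = 0
  · simp [alphaF1, hr, triangle]
  · simp [alphaF1, hr, triangle_two_mul, triangle_neg_two_mul]

theorem sum_alphaF1_mul_gaussBinom (n : ℕ) :
    ∑ r ∈ range (n + 1), alphaF1 r * gaussBinom ((X : PowerSeries ℚ) ^ 2) (2 * n) (n - r)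
      = ∑ j ∈ range (2 * n + 1),
          X ^ triangle (2 * j - ↑(2 * n)) * gaussBinom ((X : PowerSeries ℚ) ^ 2) (2 * n) j := by
  simp only [alphaF1_eq, add_mul, ite_mul, zero_mul, sum_add_distrib]
  conv_rhs => rw [show 2 * n + 1 = n + 1 + n by ring, sum_range_add, ← sum_range_reflect]
  congr 1
  · refine sum_congr rfl fun r hr => ?_
    have hr : r ≤ n := Nat.lt_succ_iff.mp (mem_range.mp hr)
    rw [Nat.add_sub_cancel, Nat.cast_sub hr]
    push_cast
    ring_nf
  · rw [sum_range_succ', if_pos rfl, add_zero]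
    refine sum_congr rfl fun i hi => ?_
    have hi : i < n := mem_range.mp hi
    rw [if_neg i.succ_ne_zero, gaussBinom_symm _ (by omega : n + 1 + i ≤ 2 * n),
      show 2 * n - (n + 1 + i) = n - (i + 1) by omega]
    push_cast
    ring_nf

/-- Slater's Bailey pair F(1) relative to `a = 1` (after the dilation `q ↦ q²`):
`β_n = 1/((q;q)_n (q^{1/2};q)_n)` satisfies `β_n = ∑_{r≤n} α_r/((q;q)_{n-r}(q;q)_{n+r})`. -/
theorem slater_F1_bailey_pair (n : ℕ) :
    (poch 2 2 n * poch 1 2 n)⁻¹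
      = ∑ r ∈ Finset.range (n+1), alphaF1 r * (poch 2 2 (n - r) * poch 2 2 (n + r))⁻¹ := by
  have hD : constantCoeff (poch 2 2 (2 * n)) ≠ 0 := by simp [constantCoeff_poch]
  have hβ : (poch 2 2 n * poch 1 2 n)⁻¹
      = (∏ t ∈ range (2 * n), (1 + (X : PowerSeries ℚ) ^ (t + 1)))
          * (poch 2 2 (2 * n))⁻¹ := by
    refine inv_eq_mul_inv_of_mul_eq (by simp [constantCoeff_poch]) hD ?_
    rw [poch_two_two_mul_poch_one_two, poch_self, qPoch_sq]
  have hα : ∀ r ∈ range (n + 1), (poch 2 2 (n - r) * poch 2 2 (n + r))⁻¹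
      = gaussBinom ((X : PowerSeries ℚ) ^ 2) (2 * n) (n - r) * (poch 2 2 (2 * n))⁻¹ := by
    intro r hr
    refine inv_eq_mul_inv_of_mul_eq (by simp [constantCoeff_poch]) hD ?_
    have h := qPoch_mul_qPoch_mul_gaussBinom ((X : PowerSeries ℚ) ^ 2)
      (by omega : n - r ≤ 2 * n)
    rwa [show 2 * n - (n - r) = n + r by have := mem_range.mp hr; omega, ← poch_self,
      ← poch_self, ← poch_self] at h
  rw [hβ, sum_congr rfl fun r hr => by rw [hα r hr, ← mul_assoc], ← sum_mul,
    sum_alphaF1_mul_gaussBinom, prod_one_add_pow_eq_sum_gaussBinom]
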